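/- arXiv:math/0101091 — 5 statements merged into one kernel-verified Lean document; each statement's English description precedes it below -/
import Mathlib

section
/- Let n ≥ 2, let d, c be positive reals, and let f = d/(2c). If every ring's total bandwidth B_i satisfies B_i ≤ c·n and also B_i ≤ d·n·x_i·(x_i−1)/2 where x_i ≥ 1 is the number of ADMs on ring i, then B_i / x_i ≤ c·n·√f. -/
theorem ring_bandwidth_per_adm_bound (n : ℕ) (hn : 2 ≤ n) (c d : ℝ)
    (hc : 0 < c) (hd : 0 < d) (x : ℝ) (hx : 1 ≤ x) :
    min (d * n * x * (x - 1) / 2) (c * n) / x ≤ c * n * Real.sqrt (d / (2 * c)) := by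
  have hn' : (0:ℝ) < n := by
    have : (2:ℝ) ≤ n := by exact_mod_cast hn
    linarith
  have hxpos : (0:ℝ) < x := lt_of_lt_of_le one_pos hx
  set s := Real.sqrt (d / (2 * c)) with hs
  have hfpos : 0 < d / (2 * c) := by positivity
  have hspos : 0 < s := Real.sqrt_pos.mpr hfpos
  have hs2 : s * s = d / (2 * c) := Real.mul_self_sqrt hfpos.le
  have hd2 : d = 2 * c * (s * s) := by
    rw [hs2]; field_simp
  rcases le_or_gt 1 (s * x) with h | h
  · calc min (d * n * x * (x - 1) / 2) (c * n) / x ≤ c * n / x :=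
        by gcongr; exact min_le_right _ _
      _ ≤ c * n * s := by
        rw [div_le_iff₀ hxpos]
        nlinarith [mul_pos hc hn']
  · calc min (d * n * x * (x - 1) / 2) (c * n) / x
        ≤ (d * n * x * (x - 1) / 2) / x :=
          by gcongr; exact min_le_left _ _
      _ = d * n * (x - 1) / 2 := by field_simp
      _ ≤ c * n * s := by
        have key : s * (x - 1) < 1 := by nlinarith
        have hpos : 0 < c * n * s := by positivity
        nlinarith [mul_lt_mul_of_pos_left key hpos]
end

section
/- Let n ≥ 2, c ≥ 1, d ≥ 1 be integers with f = d/(2c). Any feasible solution to the uniform ring grooming instance (traffic d between every pair of n nodes on a cycle of capacity c) uses at least (n²−1)·√f / 4 ADMs, assuming: each ring's total bandwidth is at most cn, and a ring with x ADMs carries total bandwidth at most dnx(x−1)/2, and the total bandwidth over all rings is at least dn(n²−1)/8. -/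
set_option maxHeartbeats 1000000 in
theorem uniform_ring_grooming_lower_bound (n c d : ℕ) (hn : 2 ≤ n) (hc : 1 ≤ c)
    (hd : 1 ≤ d) (r : ℕ) (x : Fin r → ℕ) (B : Fin r → ℝ)
    (hx : ∀ i, 1 ≤ x i)
    (hcap : ∀ i, B i ≤ (c : ℝ) * n)
    (hband : ∀ i, B i ≤ (d : ℝ) * n * (x i) * ((x i : ℝ) - 1) / 2)
    (htot : (d : ℝ) * n * ((n : ℝ) ^ 2 - 1) / 8 ≤ ∑ i, B i) :
    ((n : ℝ) ^ 2 - 1) * Real.sqrt ((d : ℝ) / (2 * c)) / 4 ≤ ∑ i, (x i : ℝ) := by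
  have hcR : (1:ℝ) ≤ c := by exact_mod_cast hc
  have hdR : (1:ℝ) ≤ d := by exact_mod_cast hd
  have hnR : (2:ℝ) ≤ n := by exact_mod_cast hn
  obtain ⟨q, hq⟩ : ∃ q, q = Real.sqrt (2 * (c:ℝ) * d) := ⟨_, rfl⟩
  have hqpos : 0 < q := hq ▸ Real.sqrt_pos.2 (by nlinarith)
  have hqsq : q ^ 2 = 2 * c * d := hq ▸ Real.sq_sqrt (by nlinarith)
  have key : ∀ i, B i ≤ (n : ℝ) * q / 2 * x i := by
    intro i
    have hxi : (1:ℝ) ≤ x i := by exact_mod_cast hx i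
    have hx0 : (0:ℝ) ≤ x i := by linarith
    rcases le_or_gt ((2:ℝ) * c) (d * (x i : ℝ) ^ 2) with h | h
    · -- big ring: use capacity bound
      have h2 : q * x i = Real.sqrt (2 * c * d * (x i : ℝ) ^ 2) := by
        rw [hq, Real.sqrt_mul (show (0:ℝ) ≤ 2 * c * d by nlinarith) ((x i:ℝ)^2), Real.sqrt_sq hx0]
      have h3 : ((2 * c : ℝ)) ^ 2 ≤ 2 * c * d * (x i : ℝ) ^ 2 := by nlinarith
      have h4 : (2 * (c:ℝ)) ≤ q * x i := by
        rw [h2]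
        calc (2 * (c:ℝ)) = Real.sqrt ((2 * c) ^ 2) := (Real.sqrt_sq (by nlinarith)).symm
          _ ≤ Real.sqrt (2 * c * d * (x i : ℝ) ^ 2) := Real.sqrt_le_sqrt h3
      calc B i ≤ (c : ℝ) * n := hcap i
        _ ≤ (n : ℝ) * q / 2 * x i := by nlinarith
    · -- small ring: use bandwidth bound
      have ha : (d:ℝ) * ((x i:ℝ) - 1)^2 ≤ 2 * c := by nlinarith
      have hb : ((d:ℝ) * ((x i:ℝ) - 1))^2 ≤ 2 * c * d := by
        nlinarith [mul_le_mul_of_nonneg_left ha (by linarith : (0:ℝ) ≤ d)]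
      have h5 : (d:ℝ) * ((x i : ℝ) - 1) ≤ q := by
        rw [hq]
        rw [show (d:ℝ) * ((x i : ℝ) - 1) = Real.sqrt ((d * ((x i:ℝ) - 1))^2) from
          (Real.sqrt_sq (by nlinarith)).symm]
        exact Real.sqrt_le_sqrt hb
      calc B i ≤ (d : ℝ) * n * (x i) * ((x i : ℝ) - 1) / 2 := hband i
        _ = (n : ℝ) * (x i) / 2 * ((d:ℝ) * ((x i:ℝ) - 1)) := by ring
        _ ≤ (n : ℝ) * (x i) / 2 * q := by
          exact mul_le_mul_of_nonneg_left h5 (by positivity)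
        _ = (n : ℝ) * q / 2 * x i := by ring
  have hsum : (d : ℝ) * n * ((n : ℝ) ^ 2 - 1) / 8 ≤ (n : ℝ) * q / 2 * ∑ i, (x i : ℝ) := by
    calc (d : ℝ) * n * ((n : ℝ) ^ 2 - 1) / 8 ≤ ∑ i, B i := htot
      _ ≤ ∑ i, ((n : ℝ) * q / 2 * x i) := Finset.sum_le_sum fun i _ => key i
      _ = (n : ℝ) * q / 2 * ∑ i, (x i : ℝ) := (Finset.mul_sum _ _ _).symm
  have hs : Real.sqrt ((d : ℝ) / (2 * c)) = d / q := by
    have h1 : ((d:ℝ) / q)^2 = d / (2 * c) := by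
      rw [div_pow, hqsq]
      rw [div_eq_div_iff (by positivity) (by positivity)]
      ring
    rw [← h1, Real.sqrt_sq (by positivity)]
  rw [hs, show ((n:ℝ)^2 - 1) * ((d:ℝ)/q) / 4 = ((d:ℝ) * ((n:ℝ)^2 - 1)) / (4 * q) by ring,
    div_le_iff₀ (by positivity)]
  have hn0 : (0:ℝ) < n := by linarith
  have hS0 : (0:ℝ) ≤ ∑ i, (x i : ℝ) := by positivity
  nlinarith [hsum, mul_pos hn0 hqpos]
end

section
/- Let n ≥ 2 and 2 ≤ M ≤ n be integers, and set μ = ⌊M/2⌋. There exists a family of M-element subsets (blocks) of {1,…,n} of size at most C(⌈n/μ⌉, 2) such that every 2-element subset of {1,…,n} is contained in at least one block. -/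
/-!
Split `{0, …, n-1}` into the `⌈n/μ⌉` consecutive blocks of length at most `μ`, i.e. the fibres of
`i ↦ i / μ`. The union of any two blocks has at most `2μ ≤ M` elements, so it can be padded to an
`M`-set; these padded unions cover every pair. A pair inside a single block is covered too, because
`2μ ≤ n` forces at least two blocks.
-/

open Finset

section FiberCovering

variable {α ι : Type*} [Fintype α] [DecidableEq ι] (f : α → ι) {μ : ℕ}

lemma card_filter_mem_le_mul (hfib : ∀ i, #{a | f a = i} ≤ μ) (p : Finset ι) :
    #{a | f a ∈ p} ≤ μ * #p :=
  card_le_mul_card_image_of_maps_to (fun _ ha ↦ (mem_filter.1 ha).2) μ fun i _ ↦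
    (card_le_card (filter_subset_filter _ (subset_univ _))).trans (hfib i)

lemma two_le_card_of_card_fiber_le [Fintype ι] [Nonempty α] (hfib : ∀ i, #{a | f a = i} ≤ μ)
    (hμ : 2 * μ ≤ Fintype.card α) : 2 ≤ Fintype.card ι := by
  have hle : Fintype.card α ≤ μ * Fintype.card ι := by
    simpa using card_filter_mem_le_mul f hfib univ
  have hpos : 0 < Fintype.card α := Fintype.card_pos
  by_contra! h
  interval_cases Fintype.card ι <;> omega

lemma exists_card_eq_two_of_mem [Fintype ι] (x y : ι) (h : 2 ≤ Fintype.card ι) :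
    ∃ p : Finset ι, #p = 2 ∧ x ∈ p ∧ y ∈ p := by
  obtain ⟨p, hxy, hp⟩ := exists_superset_card_eq (card_le_two (a := x) (b := y)) h
  exact ⟨p, hp, hxy (by simp), hxy (by simp)⟩

theorem exists_pair_covering_of_card_fiber_le [Fintype ι] [DecidableEq α] {M : ℕ}
    (hfib : ∀ i, #{a | f a = i} ≤ μ) (hμM : 2 * μ ≤ M) (hM : M ≤ Fintype.card α) :
    ∃ F : Finset (Finset α), #F ≤ (Fintype.card ι).choose 2 ∧ (∀ b ∈ F, #b = M) ∧
      ∀ j k : α, ∃ b ∈ F, j ∈ b ∧ k ∈ b := by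
  have hpad : ∀ p ∈ powersetCard 2 (univ : Finset ι), ∃ b : Finset α,
      ({a | f a ∈ p} : Finset α) ⊆ b ∧ #b = M := fun p hp ↦
    exists_superset_card_eq ((card_filter_mem_le_mul f hfib p).trans
      (by rw [(mem_powersetCard.1 hp).2]; omega)) hM
  choose! pad hpad using hpad
  refine ⟨(powersetCard 2 univ).image pad, ?_, ?_, fun j k ↦ ?_⟩
  · simpa using card_image_le (s := powersetCard 2 (univ : Finset ι)) (f := pad)
  · simpa using fun p hp ↦ (hpad p (mem_powersetCard.2 ⟨subset_univ p, hp⟩)).2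
  · have : Nonempty α := ⟨j⟩
    obtain ⟨p, hp, hj, hk⟩ := exists_card_eq_two_of_mem (f j) (f k)
      (two_le_card_of_card_fiber_le f hfib (hμM.trans hM))
    have hp' : p ∈ powersetCard 2 univ := mem_powersetCard.2 ⟨subset_univ p, hp⟩
    exact ⟨pad p, mem_image_of_mem pad hp', (hpad p hp').1 (by simpa using hj),
      (hpad p hp').1 (by simpa using hk)⟩

end FiberCovering

lemma Nat.div_lt_add_sub_one_div {i n μ : ℕ} (hi : i < n) (hμ : 0 < μ) :
    i / μ < (n + μ - 1) / μ :=
  calc i / μ < (i + μ) / μ := by rw [Nat.add_div_right i hμ]; exact Nat.lt_succ_self _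
    _ ≤ (n + μ - 1) / μ := Nat.div_le_div_right (by omega)

def blockIndex (n μ : ℕ) (hμ : 0 < μ) (i : Fin n) : Fin ((n + μ - 1) / μ) :=
  ⟨i / μ, Nat.div_lt_add_sub_one_div i.isLt hμ⟩

lemma card_blockIndex_fiber_le {n μ : ℕ} (hμ : 0 < μ) (g : Fin ((n + μ - 1) / μ)) :
    #{i | blockIndex n μ hμ i = g} ≤ μ := by
  have hmaps : ∀ i ∈ ({i | blockIndex n μ hμ i = g} : Finset (Fin n)),
      (i : ℕ) ∈ Ico (g * μ) ((g + 1) * μ) := by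
    intro i hi
    have hdiv : (i : ℕ) / μ = g := congrArg Fin.val (mem_filter.1 hi).2
    rw [mem_Ico, ← Nat.le_div_iff_mul_le hμ, ← Nat.div_lt_iff_lt_mul hμ]
    omega
  calc _ ≤ #(Ico (g * μ) ((g + 1) * μ)) :=
        card_le_card_of_injOn Fin.val hmaps Fin.val_injective.injOn
    _ = μ := by simp [add_mul]

theorem covering_design_exists_general (n M : ℕ) (hM : 2 ≤ M) (hMn : M ≤ n)
    (μ : ℕ) (hμ : μ = M / 2) :
    ∃ F : Finset (Finset (Fin n)),
      F.card ≤ Nat.choose ((n + μ - 1) / μ) 2 ∧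
      (∀ b ∈ F, b.card = M) ∧
      (∀ j k : Fin n, j ≠ k → ∃ b ∈ F, j ∈ b ∧ k ∈ b) := by
  have hμpos : 0 < μ := by omega
  obtain ⟨F, hcard, hblocks, hcover⟩ := exists_pair_covering_of_card_fiber_le
    (blockIndex n μ hμpos) (card_blockIndex_fiber_le hμpos) (by omega : 2 * μ ≤ M)
    (by simpa using hMn)
  exact ⟨F, by simpa using hcard, hblocks, fun j k _ ↦ hcover j k⟩

theorem covering_design_exists (n M : ℕ) (hn : 2 ≤ n) (hM : 2 ≤ M) (hMn : M ≤ n)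
    (μ : ℕ) (hμ : μ = M / 2) :
    ∃ F : Finset (Finset (Fin n)),
      F.card ≤ Nat.choose ((n + μ - 1) / μ) 2 ∧
      (∀ b ∈ F, b.card = M) ∧
      (∀ j k : Fin n, j ≠ k → ∃ b ∈ F, j ∈ b ∧ k ∈ b) :=
  covering_design_exists_general n M hM hMn μ hμ
end

section
/- Let n ≥ 2 and μ ≥ 2 be integers with μ − 1 < n/2, and let f > 0 be real with √(2/f) < 2μ + 2. Then [ (1/2)·((n+μ−1)/μ)·((n−1)/μ)·(2μ+1) ] / [ (n²−1)√f/4 ] < 12√2. -/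
theorem theorem2_main_estimate (n μ : ℕ) (hn : 2 ≤ n) (hμ : 2 ≤ μ)
    (hμn : (μ : ℝ) - 1 < (n : ℝ) / 2) (f : ℝ) (hf : 0 < f)
    (hsqrt : Real.sqrt (2 / f) < 2 * μ + 2) :
    ((1 / 2) * (((n : ℝ) + μ - 1) / μ) * (((n : ℝ) - 1) / μ) * (2 * μ + 1)) /
        (((n : ℝ) ^ 2 - 1) * Real.sqrt f / 4) < 12 * Real.sqrt 2 := by
  have hn' : (2:ℝ) ≤ n := by exact_mod_cast hn
  have hμ' : (2:ℝ) ≤ μ := by exact_mod_cast hμ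
  have hapos : 0 < Real.sqrt f := Real.sqrt_pos.mpr hf
  have hb : (0:ℝ) < Real.sqrt 2 := by positivity
  have hb2 : Real.sqrt 2 ^ 2 = 2 := Real.sq_sqrt (by norm_num)
  have hba : Real.sqrt 2 < (2 * μ + 2) * Real.sqrt f := by
    rw [Real.sqrt_div (by norm_num : (0:ℝ) ≤ 2), div_lt_iff₀ hapos] at hsqrt
    linarith
  have hab : 1 < ((μ:ℝ) + 1) * (Real.sqrt f * Real.sqrt 2) := by
    nlinarith [mul_lt_mul_of_pos_right hba hb]
  have hden : (0:ℝ) < ((n : ℝ) ^ 2 - 1) * Real.sqrt f / 4 := by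
    nlinarith [mul_pos (show (0:ℝ) < (n:ℝ)^2 - 1 by nlinarith) hapos]
  rw [div_lt_iff₀ hden]
  have hμ0 : (0:ℝ) < μ := by linarith
  have h2 : ((1:ℝ)/2) * (((n:ℝ) + μ - 1) / μ) * (((n:ℝ) - 1) / μ) * (2 * μ + 1)
      = (((n:ℝ) + μ - 1) * ((n:ℝ) - 1) * (2 * μ + 1)) / (2 * μ * μ) := by
    field_simp
  rw [h2, div_lt_iff₀ (by positivity : (0:ℝ) < 2 * (μ:ℝ) * μ)]
  have hP : (0:ℝ) < Real.sqrt f * Real.sqrt 2 := mul_pos hapos hb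
  have h1 : (0:ℝ) < (n:ℝ) + μ - 1 := by linarith
  have h12 : (0:ℝ) < (n:ℝ) - 1 := by linarith
  have h13 : (0:ℝ) < 2 * (μ:ℝ) + 1 := by linarith
  have hL : (0:ℝ) < ((n:ℝ) + μ - 1) * ((n:ℝ) - 1) * (2 * μ + 1) :=
    mul_pos (mul_pos h1 h12) h13
  have sA := (lt_mul_iff_one_lt_right hL).mpr hab
  have A := mul_le_mul_of_nonneg_right
    (show (n:ℝ) + μ - 1 ≤ 3/2 * ((n:ℝ)+1) by linarith)
    (show (0:ℝ) ≤ ((n:ℝ)-1) * ((2*μ+1) * (((μ:ℝ)+1) * (Real.sqrt f * Real.sqrt 2))) by positivity)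
  have B := mul_le_mul_of_nonneg_right
    (show (2*(μ:ℝ)+1) * ((μ:ℝ)+1) ≤ 15/4 * (μ:ℝ)^2 by nlinarith [sq_nonneg ((μ:ℝ)-2)])
    (show (0:ℝ) ≤ 3/2 * ((n:ℝ)+1) * (((n:ℝ)-1) * (Real.sqrt f * Real.sqrt 2)) by positivity)
  have D : (0:ℝ) ≤ ((n:ℝ)+1) * (((n:ℝ)-1) * ((μ:ℝ)^2 * (Real.sqrt f * Real.sqrt 2))) := by positivity
  ring_nf at sA A B D ⊢
  linarith [sA, A, B, D]
end

section
/- Let B and a_1,…,a_N be positive integers with a_i ≤ B, and let J ⊆ {1,…,N}. Then ∑_{j∈J} a_j ≤ B if and only if the demands {2a_j : j ∈ J}, each between vertex j and vertex n = N+1 on the cycle C_{N+1} with edge capacity c = B, can all be feasibly routed on a single ring (splitting each demand 2a_j as a_j units on each of the two arcs shows sufficiency; the cut around vertex n shows necessity). -/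
theorem bin_iff_ring (N B : ℕ) (hN : 1 ≤ N) (hB : 0 < B) (a : ℕ → ℕ)
    (ha : ∀ i ∈ Finset.Icc 1 N, 0 < a i ∧ a i ≤ B)
    (J : Finset ℕ) (hJ : J ⊆ Finset.Icc 1 N) :
    (∑ j ∈ J, a j ≤ B) ↔
      ∃ t0 t1 : ℕ → ℕ,
        (∀ j ∈ J, t0 j + t1 j = 2 * a j) ∧
        (∀ l ∈ Finset.Icc 1 N, ∑ j ∈ J, (if j ≤ l then t0 j else t1 j) ≤ B) ∧
        (∑ j ∈ J, t1 j ≤ B) := by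
  constructor
  · intro h
    refine ⟨a, a, fun j _ => by ring, fun l _ => ?_, h⟩
    calc ∑ j ∈ J, (if j ≤ l then a j else a j) = ∑ j ∈ J, a j := by
          simp
      _ ≤ B := h
  · rintro ⟨t0, t1, hsum, hcut, h1⟩
    have hN' : N ∈ Finset.Icc 1 N := Finset.mem_Icc.mpr ⟨hN, le_rfl⟩
    have h0 : ∑ j ∈ J, t0 j ≤ B := by
      calc ∑ j ∈ J, t0 j = ∑ j ∈ J, (if j ≤ N then t0 j else t1 j) :=
            Finset.sum_congr rfl fun j hj => by
              have := Finset.mem_Icc.mp (hJ hj); simp [this.2]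
        _ ≤ B := hcut N hN'
    have : 2 * ∑ j ∈ J, a j ≤ 2 * B := by
      calc 2 * ∑ j ∈ J, a j = ∑ j ∈ J, 2 * a j := by rw [Finset.mul_sum]
        _ = ∑ j ∈ J, (t0 j + t1 j) := Finset.sum_congr rfl fun j hj => (hsum j hj).symm
        _ = ∑ j ∈ J, t0 j + ∑ j ∈ J, t1 j := Finset.sum_add_distrib
        _ ≤ B + B := Nat.add_le_add h0 h1
        _ = 2 * B := (two_mul B).symm
    omega
end
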